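/- R(G) equals the connected component containing 0 of the set {x ∈ [0,1]^V : 𝕶_G(x) > 0}, with the subspace topology from ℝ^V. (Proposition 4.4.) -/

import Mathlib

open scoped Classical ENNReal

set_option linter.unusedSectionVars false

variable {V : Type*} [Fintype V] [DecidableEq V]

/-- An admissible swap exchanges two consecutive letters that are adjacent in `G`. -/
def AdjSwap (G : SimpleGraph V) (w w' : List V) : Prop :=
  ∃ (a b : List V) (u v : V), G.Adj u v ∧ w = a ++ u :: v :: b ∧ w' = a ++ v :: u :: b

/-- Two words are equivalent if one can be transformed into the other by finitely many
admissible swaps. -/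
def WordEquiv (G : SimpleGraph V) : List V → List V → Prop :=
  Relation.ReflTransGen (AdjSwap G)

lemma adjSwap_symm (G : SimpleGraph V) : Symmetric (AdjSwap G) := by
  rintro w w' ⟨a, b, u, v, h, rfl, rfl⟩
  exact ⟨a, b, v, u, h.symm, rfl, rfl⟩

/-- The setoid of words modulo admissible swaps. -/
def wordSetoid (G : SimpleGraph V) : Setoid (List V) where
  r := WordEquiv G
  iseqv := ⟨fun _ => Relation.ReflTransGen.refl,
    fun h => by
      change Relation.ReflTransGen (AdjSwap G) _ _ at h ⊢
      induction h with
      | refl => exact Relation.ReflTransGen.refl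
      | tail _ hs ih => exact Relation.ReflTransGen.head (adjSwap_symm G hs) ih,
    fun h h' => Relation.ReflTransGen.trans h h'⟩

/-- A word is `G`-reduced if between any two equal letters there is a letter distinct from
them and not adjacent to them. -/
def IsGReduced (G : SimpleGraph V) (w : List V) : Prop :=
  ∀ i j : Fin w.length, i < j → w.get i = w.get j →
    ∃ k : Fin w.length, i < k ∧ k < j ∧ w.get k ≠ w.get i ∧ ¬ G.Adj (w.get k) (w.get i)

/-- The product `x_{w_1} ⋯ x_{w_ℓ}` depends only on the equivalence class of a word. -/
noncomputable def classProd (G : SimpleGraph V) (x : V → ℝ≥0∞) :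
    Quotient (wordSetoid G) → ℝ≥0∞ :=
  Quotient.lift (fun w : List V => (w.map x).prod) (by
    intro a b h
    induction h with
    | refl => rfl
    | tail _ hs ih =>
        obtain ⟨a', b', u, v, huv, rfl, rfl⟩ := hs
        rw [ih]
        simp only [List.map_append, List.prod_append, List.map_cons, List.prod_cons]
        ring)

/-- `tildeF G x` : the sum over all equivalence classes of words of `∏ x_{w_i}`,
valued in `[0,∞]`. -/
noncomputable def tildeF (G : SimpleGraph V) (x : V → ℝ) : ℝ≥0∞ :=
  ∑' c : Quotient (wordSetoid G), classProd G (fun v => ENNReal.ofReal (x v)) c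

/-- `redF G x` : the sum over all equivalence classes of `G`-reduced words of `∏ x_{w_i}`,
valued in `[0,∞]`. -/
noncomputable def redF (G : SimpleGraph V) (x : V → ℝ) : ℝ≥0∞ :=
  ∑' c : {c : Quotient (wordSetoid G) // ∃ w, IsGReduced G w ∧ Quotient.mk (wordSetoid G) w = c},
    classProd G (fun v => ENNReal.ofReal (x v)) c.1

/-- The clique polynomial `𝕶_{G,V'}(x) = ∑_{cliques K ⊆ V'} (-1)^{|K|} ∏_{v ∈ K} x_v`. -/
noncomputable def cliquePoly (G : SimpleGraph V) (V' : Finset V) (x : V → ℝ) : ℝ :=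
  ∑ K ∈ V'.powerset.filter (fun K : Finset V => G.IsClique (K : Set V)),
    (-1 : ℝ) ^ K.card * ∏ v ∈ K, x v

/-- The Euclidean norm on `ℝ^V`. -/
noncomputable def eucNorm (x : V → ℝ) : ℝ := Real.sqrt (∑ v, x v ^ 2)

/-- `min_{V' ⊆ V} 𝕶_{G,V'}(x)`. -/
noncomputable def minK (G : SimpleGraph V) (x : V → ℝ) : ℝ :=
  Finset.univ.inf' ⟨∅, Finset.mem_univ _⟩ fun V' : Finset V => cliquePoly G V' x

/-- `ρ(u) = inf {r ∈ [0,∞) : min_{V' ⊆ V} 𝕶_{G,V'}(r·u) = 0}`. -/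
noncomputable def rho (G : SimpleGraph V) (u : V → ℝ) : ℝ :=
  sInf {r : ℝ | 0 ≤ r ∧ minK G (r • u) = 0}

/-- The region `R(G) = {x ∈ [0,1]^V : 𝕶_{G,V'}(x) > 0 for all V' ⊆ V}`. -/
def regionR (G : SimpleGraph V) : Set (V → ℝ) :=
  {x | (∀ v, x v ∈ Set.Icc (0 : ℝ) 1) ∧ ∀ V' : Finset V, 0 < cliquePoly G V' x}


/-! Removing a vertex `v` from `W` gives `𝕶_{G,W} = 𝕶_{G,W∖v} - x_v 𝕶_{G,(W∖v) ∩ N(v)}`. Hence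
lowering a coordinate cannot destroy the positivity of all the `𝕶_{G,W}`, so `R(G)` is star-shaped
about `0` and in particular connected. Moreover, wherever all `𝕶_{G,W}` are nonnegative,
`W ↦ 𝕶_{G,W}` is antitone, so `𝕶_G > 0` forces every `𝕶_{G,W}` to be positive. Thus the set
`{𝕶_G > 0}` is covered by the disjoint open sets "all `𝕶_{G,W} > 0`" and "some `𝕶_{G,W} < 0`",
and the component of `0` lies in the first one. -/

section CliquePoly

variable (G : SimpleGraph V)

lemma cliquePoly_insert (x : V → ℝ) {W : Finset V} {v : V} (hv : v ∉ W) :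
    cliquePoly G (insert v W) x
      = cliquePoly G W x - x v * cliquePoly G (W ∩ G.neighborFinset v) x := by
  have hcliq : ∀ K : Finset V, v ∉ K → (G.IsClique ((insert v K : Finset V) : Set V) ↔
      G.IsClique (K : Set V) ∧ K ⊆ G.neighborFinset v) := by
    intro K hvK
    rw [Finset.coe_insert, SimpleGraph.isClique_insert_of_notMem (by simpa using hvK)]
    simp [Finset.subset_iff]
  have hpow : (W ∩ G.neighborFinset v).powerset = W.powerset.filter (· ⊆ G.neighborFinset v) := by
    ext K
    simp only [Finset.mem_powerset, Finset.mem_filter, Finset.subset_inter_iff]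
  simp only [cliquePoly, Finset.sum_filter, Finset.sum_powerset_insert hv, hpow]
  rw [sub_eq_add_neg, Finset.mul_sum, ← Finset.sum_neg_distrib]
  refine congrArg _ (Finset.sum_congr rfl fun K hK => ?_)
  have hvK : v ∉ K := fun h => hv (Finset.mem_powerset.1 hK h)
  simp only [hcliq K hvK, Finset.card_insert_of_notMem hvK, Finset.prod_insert hvK, ite_and]
  split_ifs <;> ring

lemma cliquePoly_congr {W : Finset V} {x y : V → ℝ} (h : ∀ u ∈ W, x u = y u) :
    cliquePoly G W x = cliquePoly G W y :=
  Finset.sum_congr rfl fun K hK => by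
    rw [Finset.prod_congr rfl fun u hu => h u (Finset.mem_powerset.1 (Finset.mem_filter.1 hK).1 hu)]

lemma cliquePoly_zero (W : Finset V) : cliquePoly G W 0 = 1 := by
  rw [cliquePoly, Finset.sum_eq_single ∅]
  · simp
  · intro K _ hK
    obtain ⟨u, hu⟩ := Finset.nonempty_iff_ne_empty.2 hK
    simp [Finset.prod_eq_zero hu]
  · simp

lemma continuous_cliquePoly (W : Finset V) : Continuous (cliquePoly G W) :=
  continuous_finsetSum _ fun _ _ =>
    continuous_const.mul (continuous_finsetProd _ fun v _ => continuous_apply v)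

lemma antitone_cliquePoly {x : V → ℝ} (hx : 0 ≤ x) (h : ∀ W, 0 ≤ cliquePoly G W x) :
    Antitone (cliquePoly G · x) := by
  refine Finset.antitone_iff_forall_cons_le.2 fun W v hv => ?_
  rw [Finset.cons_eq_insert, cliquePoly_insert G x hv]
  exact sub_le_self _ (mul_nonneg (hx v) (h _))

lemma cliquePoly_pos_of_nonneg {x : V → ℝ} (hx : 0 ≤ x) (h : ∀ W, 0 ≤ cliquePoly G W x)
    (huniv : 0 < cliquePoly G Finset.univ x) (W : Finset V) : 0 < cliquePoly G W x :=
  huniv.trans_le (antitone_cliquePoly G hx h (Finset.subset_univ W))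

lemma cliquePoly_update_pos {x : V → ℝ} (h : ∀ W, 0 < cliquePoly G W x) {u : V} {t : ℝ}
    (ht : t ≤ x u) (W : Finset V) : 0 < cliquePoly G W (Function.update x u t) := by
  by_cases hu : u ∈ W
  · have hu' : u ∉ W.erase u := Finset.notMem_erase u W
    have hagree : ∀ W' ⊆ W.erase u, cliquePoly G W' (Function.update x u t) = cliquePoly G W' x :=
      fun W' hW' => cliquePoly_congr G fun w hw =>
        Function.update_of_ne (Finset.ne_of_mem_erase (hW' hw)) _ _
    have hx := h W
    rw [← Finset.insert_erase hu, cliquePoly_insert G _ hu'] at hx ⊢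
    rw [hagree _ le_rfl, hagree _ Finset.inter_subset_left, Function.update_self]
    nlinarith [h (W.erase u ∩ G.neighborFinset u)]
  · rw [cliquePoly_congr G fun w hw => Function.update_of_ne (ne_of_mem_of_not_mem hw hu) t x]
    exact h W

lemma cliquePoly_pos_of_le {x y : V → ℝ} (h : ∀ W, 0 < cliquePoly G W x) (hyx : y ≤ x)
    (W : Finset V) : 0 < cliquePoly G W y := by
  suffices ∀ s : Finset V, ∀ W, 0 < cliquePoly G W (s.piecewise y x) by
    simpa using this Finset.univ W
  intro s
  induction s using Finset.induction with
  | empty => simpa using h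
  | insert u s hus ih =>
    rw [Finset.piecewise_insert]
    exact cliquePoly_update_pos G ih (by rw [Finset.piecewise_eq_of_notMem _ _ _ hus]; exact hyx u)

lemma isOpen_setOf_forall_cliquePoly_pos : IsOpen {x : V → ℝ | ∀ W, 0 < cliquePoly G W x} := by
  simp only [Set.ofPred_forall]
  exact isOpen_iInter_of_finite fun W => isOpen_lt continuous_const (continuous_cliquePoly G W)

lemma isOpen_setOf_exists_cliquePoly_neg : IsOpen {x : V → ℝ | ∃ W, cliquePoly G W x < 0} := by
  simp only [Set.ofPred_exists]
  exact isOpen_iUnion fun W => isOpen_lt (continuous_cliquePoly G W) continuous_const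

end CliquePoly

lemma zero_mem_regionR (G : SimpleGraph V) : (0 : V → ℝ) ∈ regionR G :=
  ⟨fun _ => by simp, fun W => by simp [cliquePoly_zero]⟩

lemma starConvex_regionR (G : SimpleGraph V) : StarConvex ℝ 0 (regionR G) := by
  refine starConvex_zero_iff.2 fun x hx a ha₀ ha₁ => ?_
  have hy : 0 ≤ a • x := fun v => mul_nonneg ha₀ (hx.1 v).1
  have hyx : a • x ≤ x := fun v => mul_le_of_le_one_left (hx.1 v).1 ha₁
  exact ⟨fun v => ⟨hy v, (hyx v).trans (hx.1 v).2⟩, cliquePoly_pos_of_le G hx.2 hyx⟩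

/-- Proposition 4.4: `R(G)` is the connected component of `0` in
`{x ∈ [0,1]^V : 𝕶_G(x) > 0}`. -/
theorem regionR_eq_connectedComponentIn (G : SimpleGraph V) :
    regionR G = connectedComponentIn
      {x : V → ℝ | (∀ v, x v ∈ Set.Icc (0 : ℝ) 1) ∧ 0 < cliquePoly G Finset.univ x} 0 := by
  set S := {x : V → ℝ | (∀ v, x v ∈ Set.Icc (0 : ℝ) 1) ∧ 0 < cliquePoly G Finset.univ x}
  have h0 := zero_mem_regionR G
  have hRS : regionR G ⊆ S := fun x hx => ⟨hx.1, hx.2 _⟩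
  refine subset_antisymm (((starConvex_regionR G).isPathConnected h0).isConnected.isPreconnected
    |>.subset_connectedComponentIn h0 hRS) ?_
  have hcover : S ⊆ {x | ∀ W, 0 < cliquePoly G W x} ∪ {x | ∃ W, cliquePoly G W x < 0} := by
    intro x ⟨hbox, huniv⟩
    by_cases hneg : ∃ W, cliquePoly G W x < 0
    · exact Or.inr hneg
    · push Not at hneg
      exact Or.inl (cliquePoly_pos_of_nonneg G (fun v => (hbox v).1) hneg huniv)
  have hpos := isPreconnected_connectedComponentIn.subset_left_of_subset_union
    (isOpen_setOf_forall_cliquePoly_pos G) (isOpen_setOf_exists_cliquePoly_neg G)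
    (Set.disjoint_left.2 fun x hpos ⟨W, hW⟩ => (hpos W).not_gt hW)
    ((connectedComponentIn_subset S 0).trans hcover)
    ⟨0, mem_connectedComponentIn (hRS h0), h0.2⟩
  exact fun x hx => ⟨(connectedComponentIn_subset S 0 hx).1, hpos hx⟩
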